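/- The functions μ ↦ log Φ((a − μ)/σ) and μ ↦ log(1 − Φ((b − μ)/σ)) are concave on ℝ for any fixed σ > 0, a, b ∈ ℝ. -/

import Mathlib

open MeasureTheory ProbabilityTheory

/-- The standard normal cumulative distribution function `Φ`. -/
noncomputable def stdNormalCDF (x : ℝ) : ℝ :=
  ∫ t in Set.Iic x, gaussianPDFReal 0 1 t

/-!
Concavity survives affine reparametrisation, and `1 - Φ y = Φ (-y)`, so both claims reduce
to the concavity of `log Φ`. For the density `φ` we have `Φ' = φ` and `φ' x = -x φ x`, so
`(log Φ)'' = -φ (x Φ + φ) / Φ²` and it suffices that `x Φ x + φ x ≥ 0`. This is clear for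
`x ≥ 0`, and for `x < 0` it follows from
`-x Φ x = ∫_{t ≤ x} -x φ t ≤ ∫_{t ≤ x} -t φ t = φ x`.
-/

open Real Set
open scoped NNReal

theorem ConcaveOn.comp_const_add_mul {f : ℝ → ℝ} (hf : ConcaveOn ℝ univ f) (c d : ℝ) :
    ConcaveOn ℝ univ (fun x => f (c + d * x)) := by
  have h := (hf.translate_right c).comp_linearMap (d • LinearMap.id)
  rw [preimage_univ, preimage_univ] at h
  exact h

theorem concaveOn_univ_log_of_hasDerivAt {F F' F'' : ℝ → ℝ} (hpos : ∀ x, 0 < F x)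
    (hF : ∀ x, HasDerivAt F (F' x) x) (hF' : ∀ x, HasDerivAt F' (F'' x) x)
    (h : ∀ x, F x * F'' x ≤ F' x ^ 2) : ConcaveOn ℝ univ (fun x => log (F x)) := by
  refine concaveOn_of_hasDerivWithinAt2_nonpos convex_univ
    (f' := fun x => F' x / F x) (f'' := fun x => (F'' x * F x - F' x * F' x) / F x ^ 2)
    (fun x _ => ((hF x).log (hpos x).ne').continuousAt.continuousWithinAt)
    (fun x _ => ((hF x).log (hpos x).ne').hasDerivWithinAt)
    (fun x _ => ((hF' x).div (hF x) (hpos x).ne').hasDerivWithinAt) fun x _ => ?_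
  exact div_nonpos_of_nonpos_of_nonneg (by nlinarith [h x]) (sq_nonneg _)

theorem hasDerivAt_gaussianPDFReal (μ : ℝ) (v : ℝ≥0) (x : ℝ) :
    HasDerivAt (gaussianPDFReal μ v) (-((x - μ) / v) * gaussianPDFReal μ v x) x := by
  have hexponent : HasDerivAt (fun y => -(y - μ) ^ 2 / (2 * v)) (-((x - μ) / v)) x :=
    ((((hasDerivAt_id' x).sub_const μ).fun_pow 2).fun_neg.div_const _).congr_deriv (by ring)
  rw [gaussianPDFReal_def]
  exact (hexponent.exp.const_mul (√(2 * π * v))⁻¹).congr_deriv (by ring)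

theorem integrable_neg_mul_gaussianPDFReal_zero_one :
    Integrable (fun t => -t * gaussianPDFReal 0 1 t) := by
  convert (integrable_mul_exp_neg_mul_sq (b := 1 / 2) (by norm_num)).const_mul
    (-(√(2 * π))⁻¹) using 2 with t
  simp only [gaussianPDFReal, NNReal.coe_one, mul_one, sub_zero]
  rw [show -(1 / 2) * t ^ 2 = -t ^ 2 / 2 by ring]
  ring

theorem setIntegral_Iic_neg_mul_gaussianPDFReal_zero_one (x : ℝ) :
    ∫ t in Iic x, -t * gaussianPDFReal 0 1 t = gaussianPDFReal 0 1 x := by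
  have hderiv (t : ℝ) : HasDerivAt (gaussianPDFReal 0 1) (-t * gaussianPDFReal 0 1 t) t := by
    simpa using hasDerivAt_gaussianPDFReal 0 1 t
  have hint := integrable_neg_mul_gaussianPDFReal_zero_one.integrableOn (s := Iic x)
  have hlim := tendsto_zero_of_hasDerivAt_of_integrableOn_Iic (fun t _ => hderiv t) hint
    (integrable_gaussianPDFReal 0 1).integrableOn
  simpa using integral_Iic_of_hasDerivAt_of_tendsto' (fun t _ => hderiv t) hint hlim

theorem stdNormalCDF_pos (x : ℝ) : 0 < stdNormalCDF x := by
  rw [stdNormalCDF, setIntegral_pos_iff_support_of_nonneg_ae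
    (ae_of_all _ (gaussianPDFReal_nonneg 0 1)) (integrable_gaussianPDFReal 0 1).integrableOn]
  simp [Function.support_eq_univ fun t => (gaussianPDFReal_pos 0 1 t one_ne_zero).ne']

theorem one_sub_stdNormalCDF (x : ℝ) : 1 - stdNormalCDF x = stdNormalCDF (-x) := by
  have hint := integrable_gaussianPDFReal 0 1
  rw [← integral_gaussianPDFReal_eq_one 0 one_ne_zero,
    ← intervalIntegral.integral_Iic_add_Ioi hint.integrableOn hint.integrableOn (b := x),
    stdNormalCDF, stdNormalCDF, add_sub_cancel_left, ← integral_comp_neg_Ioi]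
  simp [gaussianPDFReal]

theorem hasDerivAt_stdNormalCDF (x : ℝ) :
    HasDerivAt stdNormalCDF (gaussianPDFReal 0 1 x) x := by
  have hint := integrable_gaussianPDFReal 0 1
  have hcont : Continuous (gaussianPDFReal 0 1) := by
    rw [gaussianPDFReal_def]
    fun_prop
  have heq :
      stdNormalCDF = fun y => stdNormalCDF 0 + ∫ t in (0 : ℝ)..y, gaussianPDFReal 0 1 t := by
    ext y
    rw [stdNormalCDF, stdNormalCDF, ← intervalIntegral.integral_Iic_sub_Iic
      hint.integrableOn hint.integrableOn, add_sub_cancel]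
  rw [heq]
  exact (intervalIntegral.integral_hasDerivAt_right (hcont.intervalIntegrable _ _)
    hcont.stronglyMeasurable.stronglyMeasurableAtFilter hcont.continuousAt).const_add _

theorem mul_stdNormalCDF_add_gaussianPDFReal_nonneg (x : ℝ) :
    0 ≤ x * stdNormalCDF x + gaussianPDFReal 0 1 x := by
  rcases le_or_gt 0 x with hx | hx
  · have := gaussianPDFReal_nonneg 0 1 x
    have := stdNormalCDF_pos x
    positivity
  · suffices -x * stdNormalCDF x ≤ gaussianPDFReal 0 1 x by linarith
    rw [← setIntegral_Iic_neg_mul_gaussianPDFReal_zero_one, stdNormalCDF, ← integral_const_mul]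
    refine setIntegral_mono_on ((integrable_gaussianPDFReal 0 1).integrableOn.const_mul _)
      integrable_neg_mul_gaussianPDFReal_zero_one.integrableOn measurableSet_Iic
      fun t (ht : t ≤ x) => ?_
    exact mul_le_mul_of_nonneg_right (by linarith) (gaussianPDFReal_nonneg 0 1 t)

theorem concaveOn_log_stdNormalCDF : ConcaveOn ℝ univ (fun x => log (stdNormalCDF x)) := by
  refine concaveOn_univ_log_of_hasDerivAt stdNormalCDF_pos hasDerivAt_stdNormalCDF
    (fun x => by simpa using hasDerivAt_gaussianPDFReal 0 1 x) fun x => ?_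
  nlinarith [mul_stdNormalCDF_add_gaussianPDFReal_nonneg x, gaussianPDFReal_nonneg 0 1 x]

theorem log_gaussian_cdf_survival_concave_general (σ a b : ℝ) :
    ConcaveOn ℝ Set.univ (fun μ : ℝ => Real.log (stdNormalCDF ((a - μ) / σ))) ∧
    ConcaveOn ℝ Set.univ (fun μ : ℝ => Real.log (1 - stdNormalCDF ((b - μ) / σ))) := by
  constructor
  · convert concaveOn_log_stdNormalCDF.comp_const_add_mul (a / σ) (-σ⁻¹) using 4 with μ
    ring
  · convert concaveOn_log_stdNormalCDF.comp_const_add_mul (-b / σ) σ⁻¹ using 3 with μ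
    rw [one_sub_stdNormalCDF]
    ring_nf

/-- the functions `μ ↦ log Φ((a−μ)/σ)` and `μ ↦ log(1 − Φ((b−μ)/σ))` are
concave on `ℝ` for any fixed `σ > 0` and `a, b ∈ ℝ`. -/
theorem log_gaussian_cdf_survival_concave (σ a b : ℝ) (hσ : 0 < σ) :
    ConcaveOn ℝ Set.univ (fun μ : ℝ => Real.log (stdNormalCDF ((a - μ) / σ))) ∧
    ConcaveOn ℝ Set.univ (fun μ : ℝ => Real.log (1 - stdNormalCDF ((b - μ) / σ))) :=
  log_gaussian_cdf_survival_concave_general σ a b
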